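/- arXiv:2309.03481 — 3 statements merged into one kernel-verified Lean document; each statement's English description precedes it below -/
import Mathlib

section
/- For every point (t,r,θ,φ,p_t,p_r,p_θ,p_φ) in the Boyer–Lindquist phase-space chart U with (p_t,p_r,p_θ,p_φ) ≠ (0,0,0,0), the following are equivalent: (i) P₀ = 0 at the point and all eight partial derivatives of P₀ (with respect to t, r, θ, φ, p_t, p_r, p_θ, p_φ) vanish at the point; (ii) r = r_s/2 and p_t + (c/r_s)·p_φ = 0. In other words, the set of double characteristics of the rescaled extremal Kerr wave symbol P₀ over U is exactly the set Σ₂ = {r = r_s/2, p_t + (c/r_s)·p_φ = 0}. -/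
/-!
With `a = r_s/2`, multiplying by `c² sin θ` turns `P₀` into the polynomial
`sin²θ (A² - c²Δ²p_r² - c²Δp_θ²) - Δ B²`, where `A = (r² + a²) p_t + a c p_φ` and
`B = c p_φ + a sin²θ p_t`. On `Σ₂` both `A` and `Δ = (r - a)²` vanish, and `Δ` vanishes to
second order in `r`, so every term is a product of two vanishing factors: `P₀` and its whole
gradient vanish. Conversely, the `p_t`- and `p_φ`-partials are a linear system in `(A, B)` with
determinant a multiple of `Δ Σ`. Off the horizon it forces `A = B = 0`, hence `p_t = p_φ = 0`,
and the `p_r`- and `p_θ`-partials give `p_r = p_θ = 0`; on the horizon the `p_t`-partial alone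
gives `A = 0`, which is the equation of `Σ₂`.
-/

noncomputable section

/-- Σ = r² + (r_s²/4)·cos²θ -/
def Sig (rs r th : ℝ) : ℝ := r ^ 2 + rs ^ 2 / 4 * Real.cos th ^ 2

/-- Δ = (r − r_s/2)² -/
def Del (rs r : ℝ) : ℝ := (r - rs / 2) ^ 2

/-- D = r² + r_s²/4 + (r_s·r/Σ)·(r_s²/4)·sin²θ -/
def Dfun (rs r th : ℝ) : ℝ :=
  r ^ 2 + rs ^ 2 / 4 + rs * r / Sig rs r th * (rs ^ 2 / 4) * Real.sin th ^ 2

/-- The Δ-rescaled principal symbol P₀ of the operator P = Δ·□_g for the extremal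
Kerr metric, in Boyer–Lindquist phase-space coordinates (t,r,θ,φ,p_t,p_r,p_θ,p_φ). -/
def P0 (rs c t r th ph pt pr pth pph : ℝ) : ℝ :=
  Sig rs r th * Real.sin th *
    (Dfun rs r th / c ^ 2 * pt ^ 2 + rs ^ 2 * r / (c * Sig rs r th) * (pt * pph)
      - Del rs r ^ 2 / Sig rs r th * pr ^ 2 - Del rs r / Sig rs r th * pth ^ 2
      - 1 / Real.sin th ^ 2 * (1 - rs * r / Sig rs r th) * pph ^ 2)

open Topology

lemma Sig_pos (rs : ℝ) {r : ℝ} (hr : r ≠ 0) (th : ℝ) : 0 < Sig rs r th := by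
  unfold Sig; positivity

lemma Sig_eq_sub_sin_sq (rs r th : ℝ) :
    Sig rs r th = r ^ 2 + rs ^ 2 / 4 - (rs / 2) ^ 2 * Real.sin th ^ 2 := by
  rw [Sig, Real.cos_sq']; ring

lemma Del_eq_zero_iff {rs r : ℝ} : Del rs r = 0 ↔ r = rs / 2 := by
  rw [Del, sq_eq_zero_iff, sub_eq_zero]

def radialFactor (rs c r pt pph : ℝ) : ℝ := (r ^ 2 + rs ^ 2 / 4) * pt + rs / 2 * (c * pph)

def angularFactor (rs c s pt pph : ℝ) : ℝ := c * pph + rs / 2 * s ^ 2 * pt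

def P0Poly (rs c r s pt pr pth pph : ℝ) : ℝ :=
  s ^ 2 * (radialFactor rs c r pt pph ^ 2 - c ^ 2 * Del rs r ^ 2 * pr ^ 2
      - c ^ 2 * Del rs r * pth ^ 2)
    - Del rs r * angularFactor rs c s pt pph ^ 2

lemma P0_eq_P0Poly {rs c r th : ℝ} (t ph pt pr pth pph : ℝ) (hc : c ≠ 0) (hr : r ≠ 0)
    (hth : Real.sin th ≠ 0) :
    P0 rs c t r th ph pt pr pth pph
      = (c ^ 2 * Real.sin th)⁻¹ * P0Poly rs c r (Real.sin th) pt pr pth pph := by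
  have hS := (Sig_pos rs hr th).ne'
  rw [eq_inv_mul_iff_mul_eq₀ (by positivity), P0, P0Poly, radialFactor, angularFactor, Dfun]
  field_simp
  rw [Sig_eq_sub_sin_sq, Del]
  ring

lemma P0Poly_eq_zero_of_Del_eq_zero {rs c r s pt pr pth pph : ℝ} (hΔ : Del rs r = 0)
    (hA : radialFactor rs c r pt pph = 0) : P0Poly rs c r s pt pr pth pph = 0 := by
  simp [P0Poly, hΔ, hA]

section Derivatives

variable {rs c r s pt pr pth pph : ℝ}

lemma hasDerivAt_P0Poly_pt :
    HasDerivAt (fun p => P0Poly rs c r s p pr pth pph)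
      (2 * s ^ 2 * (r ^ 2 + rs ^ 2 / 4) * radialFactor rs c r pt pph
        - rs * s ^ 2 * Del rs r * angularFactor rs c s pt pph) pt := by
  have hA : HasDerivAt (fun p => radialFactor rs c r p pph) (r ^ 2 + rs ^ 2 / 4) pt :=
    (((hasDerivAt_id' pt).const_mul _).add_const _).congr_deriv (mul_one _)
  have hB : HasDerivAt (fun p => angularFactor rs c s p pph) (rs / 2 * s ^ 2) pt :=
    (((hasDerivAt_id' pt).const_mul _).const_add _).congr_deriv (mul_one _)
  refine ((((hA.pow 2).sub_const _).sub_const _).const_mul (s ^ 2)).sub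
    ((hB.pow 2).const_mul (Del rs r)) |>.congr_deriv ?_
  push_cast
  ring

lemma hasDerivAt_P0Poly_pph :
    HasDerivAt (fun p => P0Poly rs c r s pt pr pth p)
      (rs * c * s ^ 2 * radialFactor rs c r pt pph
        - 2 * c * Del rs r * angularFactor rs c s pt pph) pph := by
  have hA : HasDerivAt (fun p => radialFactor rs c r pt p) (rs / 2 * c) pph :=
    ((hasDerivAt_id' pph).const_mul c |>.const_mul _ |>.const_add _).congr_deriv (by ring)
  have hB : HasDerivAt (fun p => angularFactor rs c s pt p) c pph :=
    (((hasDerivAt_id' pph).const_mul _).add_const _).congr_deriv (mul_one _)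
  refine ((((hA.pow 2).sub_const _).sub_const _).const_mul (s ^ 2)).sub
    ((hB.pow 2).const_mul (Del rs r)) |>.congr_deriv ?_
  push_cast
  ring

lemma hasDerivAt_P0Poly_pr :
    HasDerivAt (fun p => P0Poly rs c r s pt p pth pph)
      (-2 * s ^ 2 * c ^ 2 * Del rs r ^ 2 * pr) pr := by
  refine ((((hasDerivAt_pow 2 pr).const_mul _).const_sub _).sub_const _ |>.const_mul (s ^ 2)
    |>.sub_const _).congr_deriv ?_
  push_cast
  ring

lemma hasDerivAt_P0Poly_pth :
    HasDerivAt (fun p => P0Poly rs c r s pt pr p pph)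
      (-2 * s ^ 2 * c ^ 2 * Del rs r * pth) pth := by
  refine ((((hasDerivAt_pow 2 pth).const_mul _).const_sub _).const_mul (s ^ 2)
    |>.sub_const _).congr_deriv ?_
  push_cast
  ring

lemma hasDerivAt_P0Poly_r_half (hA : radialFactor rs c (rs / 2) pt pph = 0) :
    HasDerivAt (fun r => P0Poly rs c r s pt pr pth pph) 0 (rs / 2) := by
  have hA' : HasDerivAt (fun r => radialFactor rs c r pt pph) (2 * (rs / 2) * pt) (rs / 2) :=
    (((hasDerivAt_pow 2 _).add_const _).mul_const pt |>.add_const _).congr_deriv (by ring)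
  have hΔ : HasDerivAt (fun r => Del rs r) 0 (rs / 2) :=
    (((hasDerivAt_id' _).sub_const (rs / 2)).pow 2).congr_deriv (by ring)
  refine ((((hA'.pow 2).sub ((hΔ.pow 2).const_mul (c ^ 2) |>.mul_const (pr ^ 2))).sub
    ((hΔ.const_mul (c ^ 2)).mul_const (pth ^ 2))).const_mul (s ^ 2)).sub
    (hΔ.mul_const _) |>.congr_deriv ?_
  simp [hA, Del]

end Derivatives

section P0Derivatives

variable {rs c r th : ℝ} {t ph pt pr pth pph : ℝ}

lemma deriv_P0_pt_eq_zero_iff (hc : c ≠ 0) (hr : r ≠ 0) (hth : Real.sin th ≠ 0) :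
    deriv (fun p => P0 rs c t r th ph p pr pth pph) pt = 0 ↔
      2 * Real.sin th ^ 2 * (r ^ 2 + rs ^ 2 / 4) * radialFactor rs c r pt pph
        - rs * Real.sin th ^ 2 * Del rs r * angularFactor rs c (Real.sin th) pt pph = 0 := by
  simp_rw [P0_eq_P0Poly _ _ _ _ _ _ hc hr hth, (hasDerivAt_P0Poly_pt.const_mul _).deriv]
  simp [hc, hth]

lemma deriv_P0_pph_eq_zero_iff (hc : c ≠ 0) (hr : r ≠ 0) (hth : Real.sin th ≠ 0) :
    deriv (fun p => P0 rs c t r th ph pt pr pth p) pph = 0 ↔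
      rs * c * Real.sin th ^ 2 * radialFactor rs c r pt pph
        - 2 * c * Del rs r * angularFactor rs c (Real.sin th) pt pph = 0 := by
  simp_rw [P0_eq_P0Poly _ _ _ _ _ _ hc hr hth, (hasDerivAt_P0Poly_pph.const_mul _).deriv]
  simp [hc, hth]

lemma deriv_P0_pr_eq_zero_iff (hc : c ≠ 0) (hr : r ≠ 0) (hth : Real.sin th ≠ 0) :
    deriv (fun p => P0 rs c t r th ph pt p pth pph) pr = 0 ↔
      -2 * Real.sin th ^ 2 * c ^ 2 * Del rs r ^ 2 * pr = 0 := by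
  simp_rw [P0_eq_P0Poly _ _ _ _ _ _ hc hr hth, (hasDerivAt_P0Poly_pr.const_mul _).deriv]
  simp [hc, hth]

lemma deriv_P0_pth_eq_zero_iff (hc : c ≠ 0) (hr : r ≠ 0) (hth : Real.sin th ≠ 0) :
    deriv (fun p => P0 rs c t r th ph pt pr p pph) pth = 0 ↔
      -2 * Real.sin th ^ 2 * c ^ 2 * Del rs r * pth = 0 := by
  simp_rw [P0_eq_P0Poly _ _ _ _ _ _ hc hr hth, (hasDerivAt_P0Poly_pth.const_mul _).deriv]
  simp [hc, hth]

lemma P0_eq_zero_of_Del_eq_zero (hc : c ≠ 0) (hr : r ≠ 0) (hth : Real.sin th ≠ 0)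
    (hΔ : Del rs r = 0) (hA : radialFactor rs c r pt pph = 0) :
    P0 rs c t r th ph pt pr pth pph = 0 := by
  rw [P0_eq_P0Poly _ _ _ _ _ _ hc hr hth, P0Poly_eq_zero_of_Del_eq_zero hΔ hA, mul_zero]

lemma deriv_P0_th_eq_zero (hc : c ≠ 0) (hr : r ≠ 0) (hth : Real.sin th ≠ 0)
    (hΔ : Del rs r = 0) (hA : radialFactor rs c r pt pph = 0) :
    deriv (fun θ => P0 rs c t r θ ph pt pr pth pph) th = 0 := by
  have hU : {θ : ℝ | Real.sin θ ≠ 0} ∈ 𝓝 th :=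
    (isOpen_ne.preimage Real.continuous_sin).mem_nhds hth
  have h : (fun θ => P0 rs c t r θ ph pt pr pth pph) =ᶠ[𝓝 th] fun _ => 0 :=
    Filter.eventually_of_mem hU fun θ hθ => P0_eq_zero_of_Del_eq_zero hc hr hθ hΔ hA
  rw [h.deriv_eq, deriv_const]

lemma deriv_P0_r_half_eq_zero (hc : c ≠ 0) (hrs : rs ≠ 0) (hth : Real.sin th ≠ 0)
    (hA : radialFactor rs c (rs / 2) pt pph = 0) :
    deriv (fun r => P0 rs c t r th ph pt pr pth pph) (rs / 2) = 0 := by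
  have h : (fun r => P0 rs c t r th ph pt pr pth pph) =ᶠ[𝓝 (rs / 2)]
      fun r => (c ^ 2 * Real.sin th)⁻¹ * P0Poly rs c r (Real.sin th) pt pr pth pph :=
    Filter.eventually_of_mem (isOpen_ne.mem_nhds (by simpa using hrs))
      fun r hr => P0_eq_P0Poly _ _ _ _ _ _ hc hr hth
  rw [h.deriv_eq, ((hasDerivAt_P0Poly_r_half hA).const_mul _).deriv, mul_zero]

end P0Derivatives

lemma radialFactor_half_eq_zero_iff {rs c pt pph : ℝ} (hrs : rs ≠ 0) :
    radialFactor rs c (rs / 2) pt pph = 0 ↔ pt + c / rs * pph = 0 := by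
  have h : radialFactor rs c (rs / 2) pt pph = rs ^ 2 / 2 * (pt + c / rs * pph) := by
    rw [radialFactor]; field_simp; ring
  simp [h, hrs]

lemma mem_Sigma2_of_Del_eq_zero {rs c r s pt pph : ℝ} (hr : r ≠ 0) (hs : s ≠ 0)
    (hΔ : Del rs r = 0)
    (h_pt : 2 * s ^ 2 * (r ^ 2 + rs ^ 2 / 4) * radialFactor rs c r pt pph
        - rs * s ^ 2 * Del rs r * angularFactor rs c s pt pph = 0) :
    r = rs / 2 ∧ pt + c / rs * pph = 0 := by
  have hK : 0 < r ^ 2 + rs ^ 2 / 4 := by positivity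
  have hA : radialFactor rs c r pt pph = 0 := by simpa [hΔ, hs, hK.ne'] using h_pt
  obtain rfl := Del_eq_zero_iff.1 hΔ
  exact ⟨rfl, (radialFactor_half_eq_zero_iff (by simpa using hr)).1 hA⟩

lemma momenta_eq_zero_of_partials {rs c r s pt pr pth pph : ℝ} (hc : c ≠ 0) (hs : s ≠ 0)
    (hSig : r ^ 2 + rs ^ 2 / 4 - (rs / 2) ^ 2 * s ^ 2 ≠ 0) (hΔ : Del rs r ≠ 0)
    (h_pt : 2 * s ^ 2 * (r ^ 2 + rs ^ 2 / 4) * radialFactor rs c r pt pph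
        - rs * s ^ 2 * Del rs r * angularFactor rs c s pt pph = 0)
    (h_pph : rs * c * s ^ 2 * radialFactor rs c r pt pph
        - 2 * c * Del rs r * angularFactor rs c s pt pph = 0)
    (h_pr : -2 * s ^ 2 * c ^ 2 * Del rs r ^ 2 * pr = 0)
    (h_pth : -2 * s ^ 2 * c ^ 2 * Del rs r * pth = 0) :
    pt = 0 ∧ pr = 0 ∧ pth = 0 ∧ pph = 0 := by
  have hA : radialFactor rs c r pt pph = 0 := by
    have h : (2 * c * s ^ 2 * (r ^ 2 + rs ^ 2 / 4 - (rs / 2) ^ 2 * s ^ 2))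
        * radialFactor rs c r pt pph = 0 := by
      linear_combination c * h_pt - rs / 2 * s ^ 2 * h_pph
    simpa [hc, hs, hSig] using h
  have hB : angularFactor rs c s pt pph = 0 := by
    have h : (2 * c * Del rs r) * angularFactor rs c s pt pph = 0 := by
      linear_combination -h_pph + rs * c * s ^ 2 * hA
    simpa [hc, hΔ] using h
  rw [radialFactor] at hA
  rw [angularFactor] at hB
  have hpt : pt = 0 := by
    have h : (r ^ 2 + rs ^ 2 / 4 - (rs / 2) ^ 2 * s ^ 2) * pt = 0 := by
      linear_combination hA - rs / 2 * hB
    simpa [hSig] using h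
  refine ⟨hpt, by simpa [hc, hs, hΔ] using h_pr, by simpa [hc, hs, hΔ] using h_pth, ?_⟩
  have h : c * pph = 0 := by linear_combination hB - rs / 2 * s ^ 2 * hpt
  simpa [hc] using h

theorem double_characteristics_eq_Sigma2_general
    (rs c : ℝ) (hc : 0 < c)
    (t r th ph pt pr pth pph : ℝ)
    (hr : 0 < r) (hth : Real.sin th ≠ 0)
    (hp : ¬(pt = 0 ∧ pr = 0 ∧ pth = 0 ∧ pph = 0)) :
    (P0 rs c t r th ph pt pr pth pph = 0 ∧
      deriv (fun s => P0 rs c s r th ph pt pr pth pph) t = 0 ∧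
      deriv (fun s => P0 rs c t s th ph pt pr pth pph) r = 0 ∧
      deriv (fun s => P0 rs c t r s ph pt pr pth pph) th = 0 ∧
      deriv (fun s => P0 rs c t r th s pt pr pth pph) ph = 0 ∧
      deriv (fun s => P0 rs c t r th ph s pr pth pph) pt = 0 ∧
      deriv (fun s => P0 rs c t r th ph pt s pth pph) pr = 0 ∧
      deriv (fun s => P0 rs c t r th ph pt pr s pph) pth = 0 ∧
      deriv (fun s => P0 rs c t r th ph pt pr pth s) pph = 0)
    ↔ (r = rs / 2 ∧ pt + c / rs * pph = 0) := by
  have hc0 := hc.ne'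
  have hr0 := hr.ne'
  constructor
  · rintro ⟨-, -, -, -, -, h_pt, h_pr, h_pth, h_pph⟩
    rw [deriv_P0_pt_eq_zero_iff hc0 hr0 hth] at h_pt
    by_cases hΔ : Del rs r = 0
    · exact mem_Sigma2_of_Del_eq_zero hr0 hth hΔ h_pt
    · rw [deriv_P0_pph_eq_zero_iff hc0 hr0 hth] at h_pph
      rw [deriv_P0_pr_eq_zero_iff hc0 hr0 hth] at h_pr
      rw [deriv_P0_pth_eq_zero_iff hc0 hr0 hth] at h_pth
      have hSig := (Sig_eq_sub_sin_sq rs r th).symm ▸ (Sig_pos rs hr0 th).ne'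
      exact absurd (momenta_eq_zero_of_partials hc0 hth hSig hΔ h_pt h_pph h_pr h_pth) hp
  · rintro ⟨rfl, hrel⟩
    have hrs : rs ≠ 0 := by linarith
    have hΔ : Del rs (rs / 2) = 0 := Del_eq_zero_iff.2 rfl
    have hA := (radialFactor_half_eq_zero_iff hrs).2 hrel
    refine ⟨P0_eq_zero_of_Del_eq_zero hc0 hr0 hth hΔ hA, deriv_const _ _,
      deriv_P0_r_half_eq_zero hc0 hrs hth hA, deriv_P0_th_eq_zero hc0 hr0 hth hΔ hA,
      deriv_const _ _, ?_, ?_, ?_, ?_⟩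
    · simp [deriv_P0_pt_eq_zero_iff hc0 hr0 hth, hΔ, hA]
    · simp [deriv_P0_pr_eq_zero_iff hc0 hr0 hth, hΔ]
    · simp [deriv_P0_pth_eq_zero_iff hc0 hr0 hth, hΔ]
    · simp [deriv_P0_pph_eq_zero_iff hc0 hr0 hth, hΔ, hA]

/-- on the chart U = {r > 0, sin θ ≠ 0}, for nonzero covectors, the point is a
double characteristic of P₀ (P₀ = 0 and all eight partial derivatives of P₀ vanish) iff it
belongs to Σ₂ = {r = r_s/2, p_t + (c/r_s)·p_φ = 0}. -/
theorem double_characteristics_eq_Sigma2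
    (rs c : ℝ) (hrs : 0 < rs) (hc : 0 < c)
    (t r th ph pt pr pth pph : ℝ)
    (hr : 0 < r) (hth : Real.sin th ≠ 0)
    (hp : ¬(pt = 0 ∧ pr = 0 ∧ pth = 0 ∧ pph = 0)) :
    (P0 rs c t r th ph pt pr pth pph = 0 ∧
      deriv (fun s => P0 rs c s r th ph pt pr pth pph) t = 0 ∧
      deriv (fun s => P0 rs c t s th ph pt pr pth pph) r = 0 ∧
      deriv (fun s => P0 rs c t r s ph pt pr pth pph) th = 0 ∧
      deriv (fun s => P0 rs c t r th s pt pr pth pph) ph = 0 ∧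
      deriv (fun s => P0 rs c t r th ph s pr pth pph) pt = 0 ∧
      deriv (fun s => P0 rs c t r th ph pt s pth pph) pr = 0 ∧
      deriv (fun s => P0 rs c t r th ph pt pr s pph) pth = 0 ∧
      deriv (fun s => P0 rs c t r th ph pt pr pth s) pph = 0)
    ↔ (r = rs / 2 ∧ pt + c / rs * pph = 0) :=
  double_characteristics_eq_Sigma2_general rs c hc t r th ph pt pr pth pph hr hth hp
end
end

section
/- For every point (t,r,θ,φ,p_t,p_r,p_θ,p_φ) in the Boyer–Lindquist phase-space chart U with r = r_s/2 (i.e. on the extremal horizon), the rescaled principal symbol factors as a perfect square: P₀ = (r_s⁴·sinθ/(4·c²))·(p_t + (c/r_s)·p_φ)². -/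
noncomputable section

/-! Multiplying out the factor `Σ`, the coefficient of `p_t²` becomes
`Σ·D = (r² + r_s²/4)² − (r_s²/4)·Δ·sin²θ` and that of `p_φ²` becomes
`(Σ − r_s·r)/sinθ = Δ/sinθ − (r_s²/4)·sinθ`, both exact identities of the Kerr functions.
On the extremal horizon `r = r_s/2` we have `Δ = 0`, so they reduce to `r_s⁴/4` and
`−(r_s²/4)·sinθ`, and together with the cross term `r_s³/(2c)` the quadratic form is the
square of `r_s²/(2c)·p_t + (r_s/2)·p_φ`. -/

theorem Sig_sub_eq_Del_sub (rs r th : ℝ) :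
    Sig rs r th - rs * r = Del rs r - rs ^ 2 / 4 * Real.sin th ^ 2 := by
  unfold Sig Del
  linear_combination rs ^ 2 / 4 * Real.cos_sq_add_sin_sq th

theorem Sig_mul_Dfun {rs r th : ℝ} (h : Sig rs r th ≠ 0) :
    Sig rs r th * Dfun rs r th
      = (r ^ 2 + rs ^ 2 / 4) ^ 2 - rs ^ 2 / 4 * Del rs r * Real.sin th ^ 2 := by
  have hexpand : Sig rs r th * Dfun rs r th
      = Sig rs r th * (r ^ 2 + rs ^ 2 / 4) + rs * r * (rs ^ 2 / 4) * Real.sin th ^ 2 := by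
    unfold Dfun
    field_simp
  rw [hexpand]
  unfold Sig Del
  linear_combination (r ^ 2 + rs ^ 2 / 4) * rs ^ 2 / 4 * Real.cos_sq_add_sin_sq th

theorem P0_eq_of_Sig_ne_zero {rs c t r th ph pt pr pth pph : ℝ} (hsig : Sig rs r th ≠ 0)
    (hsin : Real.sin th ≠ 0) :
    P0 rs c t r th ph pt pr pth pph
      = Real.sin th * (Sig rs r th * Dfun rs r th / c ^ 2 * pt ^ 2
          + rs ^ 2 * r / c * (pt * pph) - Del rs r ^ 2 * pr ^ 2 - Del rs r * pth ^ 2)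
        - (Sig rs r th - rs * r) / Real.sin th * pph ^ 2 := by
  unfold P0
  field_simp

theorem Del_horizon (rs : ℝ) : Del rs (rs / 2) = 0 := by
  simp [Del]

theorem Sig_horizon_ne_zero {rs : ℝ} (hrs : rs ≠ 0) (th : ℝ) : Sig rs (rs / 2) th ≠ 0 := by
  unfold Sig
  positivity

theorem P0_perfect_square_on_horizon_general
    (rs c : ℝ) (hrs : 0 < rs) (hc : 0 < c)
    (t r th ph pt pr pth pph : ℝ)
    (hth : Real.sin th ≠ 0)
    (hhor : r = rs / 2) :
    P0 rs c t r th ph pt pr pth pph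
      = rs ^ 4 * Real.sin th / (4 * c ^ 2) * (pt + c / rs * pph) ^ 2 := by
  subst hhor
  have hsig := Sig_horizon_ne_zero hrs.ne' th
  rw [P0_eq_of_Sig_ne_zero hsig hth, Sig_mul_Dfun hsig, Sig_sub_eq_Del_sub, Del_horizon]
  field_simp
  ring

/-- on the extremal horizon r = r_s/2, the rescaled principal symbol is a
perfect square: P₀ = (r_s⁴·sinθ/(4c²))·(p_t + (c/r_s)·p_φ)². -/
theorem P0_perfect_square_on_horizon
    (rs c : ℝ) (hrs : 0 < rs) (hc : 0 < c)
    (t r th ph pt pr pth pph : ℝ)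
    (hr : 0 < r) (hth : Real.sin th ≠ 0)
    (hhor : r = rs / 2) :
    P0 rs c t r th ph pt pr pth pph
      = rs ^ 4 * Real.sin th / (4 * c ^ 2) * (pt + c / rs * pph) ^ 2 :=
  P0_perfect_square_on_horizon_general rs c hrs hc t r th ph pt pr pth pph hth hhor
end
end

section
/- For every point (t,r,θ,φ,p_t,p_r,p_θ,p_φ) in the Boyer–Lindquist phase-space chart U with r ≠ r_s/2, the subprincipal-symbol expression s := Δ·Σ_{μ∈{t,r,θ,φ}} ∂_μ( Σ·sinθ·g^{μν}p_ν ) + Σ_{μ∈{t,r,θ,φ}} ∂_μ( Δ·Σ·sinθ·g^{μν}p_ν ) (where ∂_μ denotes the partial derivative in the coordinate q^μ and summation over ν is implied) equals 6·sinθ·(r − r_s/2)³·p_r + 2·(r − r_s/2)²·cosθ·p_θ. Consequently s extends continuously across the horizon with value 0 at every point with r = r_s/2; i.e. the subprincipal symbol of P = Δ·□_g vanishes on the horizon cotangent set. -/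
noncomputable section

/-- g^{tt} = −D/(c²·Δ) -/
def gtt (rs c r th : ℝ) : ℝ := -(Dfun rs r th) / (c ^ 2 * Del rs r)

/-- g^{tφ} = g^{φt} = −r_s²·r/(2·c·Δ·Σ) -/
def gtph (rs c r th : ℝ) : ℝ := -(rs ^ 2 * r) / (2 * c * Del rs r * Sig rs r th)

/-- g^{rr} = Δ/Σ -/
def grr (rs r th : ℝ) : ℝ := Del rs r / Sig rs r th

/-- g^{θθ} = 1/Σ -/
def gthth (rs r th : ℝ) : ℝ := 1 / Sig rs r th

/-- g^{φφ} = (1/(Δ·sin²θ))·(1 − r_s·r/Σ) -/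
def gphph (rs r th : ℝ) : ℝ :=
  1 / (Del rs r * Real.sin th ^ 2) * (1 - rs * r / Sig rs r th)

/-!
The `t`- and `φ`-fluxes do not depend on `t` and `φ`, while `Σ` cancels from the other two:
the `θ`-flux is `p_θ sin θ` and the `r`-flux is `p_r sin θ Δ`. Since `Δ = (r - r_s/2)²` has
derivative `2 (r - r_s/2)`, what remains is a polynomial in `r - r_s/2` with no constant term.
-/

open Filter Topology

namespace ExtremalKerr

variable {rs r th : ℝ}

theorem Sig_pos (hr : r ≠ 0) : 0 < Sig rs r th := by
  unfold Sig
  positivity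

theorem hasDerivAt_Del (rs r : ℝ) : HasDerivAt (Del rs) (2 * (r - rs / 2)) r :=
  (((hasDerivAt_id' r).sub_const (rs / 2)).fun_pow 2).congr_deriv (by ring)

theorem radial_flux_eventuallyEq (pr : ℝ) (hr : r ≠ 0) :
    (fun r' => Sig rs r' th * Real.sin th * (grr rs r' th * pr))
      =ᶠ[𝓝 r] fun r' => Real.sin th * pr * Del rs r' := by
  filter_upwards [isOpen_ne.mem_nhds hr] with r' hr'
  have := (Sig_pos (rs := rs) (th := th) hr').ne'
  unfold grr
  field_simp

theorem hasDerivAt_radial_flux (pr : ℝ) (hr : r ≠ 0) :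
    HasDerivAt (fun r' => Sig rs r' th * Real.sin th * (grr rs r' th * pr))
      (Real.sin th * pr * (2 * (r - rs / 2))) r :=
  ((hasDerivAt_Del rs r).const_mul _).congr_of_eventuallyEq (radial_flux_eventuallyEq pr hr)

theorem hasDerivAt_Del_mul_radial_flux (pr : ℝ) (hr : r ≠ 0) :
    HasDerivAt (fun r' => Del rs r' * (Sig rs r' th * Real.sin th * (grr rs r' th * pr)))
      (4 * Real.sin th * pr * (r - rs / 2) ^ 3) r := by
  have h := (hasDerivAt_Del rs r).fun_mul (hasDerivAt_radial_flux (rs := rs) (th := th) pr hr)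
  have flux_at_r := (radial_flux_eventuallyEq (rs := rs) (th := th) pr hr).eq_of_nhds
  refine h.congr_deriv ?_
  rw [flux_at_r, Del]
  ring

theorem angular_flux_eq (pth : ℝ) (hr : r ≠ 0) (th : ℝ) :
    Sig rs r th * Real.sin th * (gthth rs r th * pth) = pth * Real.sin th := by
  have := (Sig_pos (rs := rs) (th := th) hr).ne'
  unfold gthth
  field_simp

theorem hasDerivAt_angular_flux (pth : ℝ) (hr : r ≠ 0) (th : ℝ) :
    HasDerivAt (fun th' => Sig rs r th' * Real.sin th' * (gthth rs r th' * pth))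
      (pth * Real.cos th) th := by
  simp only [angular_flux_eq pth hr]
  exact (Real.hasDerivAt_sin th).const_mul pth

end ExtremalKerr

open ExtremalKerr in
theorem subprincipal_symbol_vanishes_on_horizon_general
    (rs c : ℝ)
    (t r th ph pt pr pth pph : ℝ)
    (hr : 0 < r) :
    (Del rs r *
      (deriv (fun _s : ℝ =>
          Sig rs r th * Real.sin th * (gtt rs c r th * pt + gtph rs c r th * pph)) t
        + deriv (fun r' =>
          Sig rs r' th * Real.sin th * (grr rs r' th * pr)) r
        + deriv (fun th' =>
          Sig rs r th' * Real.sin th' * (gthth rs r th' * pth)) th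
        + deriv (fun _s : ℝ =>
          Sig rs r th * Real.sin th * (gtph rs c r th * pt + gphph rs r th * pph)) ph)
      + (deriv (fun _s : ℝ =>
          Del rs r * (Sig rs r th * Real.sin th * (gtt rs c r th * pt + gtph rs c r th * pph))) t
        + deriv (fun r' =>
          Del rs r' * (Sig rs r' th * Real.sin th * (grr rs r' th * pr))) r
        + deriv (fun th' =>
          Del rs r * (Sig rs r th' * Real.sin th' * (gthth rs r th' * pth))) th
        + deriv (fun _s : ℝ =>
          Del rs r * (Sig rs r th * Real.sin th * (gtph rs c r th * pt + gphph rs r th * pph))) ph)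
      = 6 * Real.sin th * (r - rs / 2) ^ 3 * pr
        + 2 * (r - rs / 2) ^ 2 * Real.cos th * pth)
    ∧ Filter.Tendsto
        (fun r' => 6 * Real.sin th * (r' - rs / 2) ^ 3 * pr
          + 2 * (r' - rs / 2) ^ 2 * Real.cos th * pth)
        (nhds (rs / 2)) (nhds 0) := by
  refine ⟨?_, ?_⟩
  · rw [deriv_const, deriv_const, deriv_const, deriv_const,
      (hasDerivAt_radial_flux pr hr.ne').deriv, (hasDerivAt_Del_mul_radial_flux pr hr.ne').deriv,
      (hasDerivAt_angular_flux pth hr.ne' th).deriv,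
      ((hasDerivAt_angular_flux pth hr.ne' th).const_mul (Del rs r)).deriv]
    unfold Del
    ring
  · have h : Continuous fun r' => 6 * Real.sin th * (r' - rs / 2) ^ 3 * pr
        + 2 * (r' - rs / 2) ^ 2 * Real.cos th * pth := by fun_prop
    simpa using h.tendsto (rs / 2)

/-- off the horizon, the subprincipal-symbol expression
s = Δ·Σ_μ ∂_μ(√(−g)·g^{μν}p_ν) + Σ_μ ∂_μ(Δ·√(−g)·g^{μν}p_ν), with √(−g) = Σ·sinθ,
equals 6·sinθ·(r − r_s/2)³·p_r + 2·(r − r_s/2)²·cosθ·p_θ; consequently it extends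
continuously across the horizon with value 0 there. -/
theorem subprincipal_symbol_vanishes_on_horizon
    (rs c : ℝ) (hrs : 0 < rs) (hc : 0 < c)
    (t r th ph pt pr pth pph : ℝ)
    (hr : 0 < r) (hth : Real.sin th ≠ 0) (hoff : r ≠ rs / 2) :
    (Del rs r *
      (deriv (fun _s : ℝ =>
          Sig rs r th * Real.sin th * (gtt rs c r th * pt + gtph rs c r th * pph)) t
        + deriv (fun r' =>
          Sig rs r' th * Real.sin th * (grr rs r' th * pr)) r
        + deriv (fun th' =>
          Sig rs r th' * Real.sin th' * (gthth rs r th' * pth)) th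
        + deriv (fun _s : ℝ =>
          Sig rs r th * Real.sin th * (gtph rs c r th * pt + gphph rs r th * pph)) ph)
      + (deriv (fun _s : ℝ =>
          Del rs r * (Sig rs r th * Real.sin th * (gtt rs c r th * pt + gtph rs c r th * pph))) t
        + deriv (fun r' =>
          Del rs r' * (Sig rs r' th * Real.sin th * (grr rs r' th * pr))) r
        + deriv (fun th' =>
          Del rs r * (Sig rs r th' * Real.sin th' * (gthth rs r th' * pth))) th
        + deriv (fun _s : ℝ =>
          Del rs r * (Sig rs r th * Real.sin th * (gtph rs c r th * pt + gphph rs r th * pph))) ph)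
      = 6 * Real.sin th * (r - rs / 2) ^ 3 * pr
        + 2 * (r - rs / 2) ^ 2 * Real.cos th * pth)
    ∧ Filter.Tendsto
        (fun r' => 6 * Real.sin th * (r' - rs / 2) ^ 3 * pr
          + 2 * (r' - rs / 2) ^ 2 * Real.cos th * pth)
        (nhds (rs / 2)) (nhds 0) :=
  subprincipal_symbol_vanishes_on_horizon_general rs c t r th ph pt pr pth pph hr
end
end
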